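/- Let U be a random variable uniformly distributed on [0,1], let f : [0,1] → ℝ be monotone (say nondecreasing) and square integrable. Then Cov(f(U), f(1−U)) ≤ 0, so the antithetic estimator (f(U) + f(1−U))/2 has variance at most Var(f(U))/2. -/

import Mathlib

open MeasureTheory ProbabilityTheory Set

/-!
`f(U)` and `f(1 - U)` are a nondecreasing and a nonincreasing function of the same variable, so
they antivary, and Chebyshev's correlation inequality (the rearrangement inequality
`g x h x + g y h y ≤ g x h y + g y h x` integrated over two independent copies) makes their
covariance nonpositive. Since `1 - U` is again uniform, `f(1 - U)` has the law of `f(U)`, and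
`Var((X + Y) / 2) = (Var X + 2 Cov(X, Y) + Var Y) / 4 ≤ Var X / 2`.
-/

section Chebyshev

variable {Ω : Type*} [MeasurableSpace Ω] {μ : Measure Ω} [IsProbabilityMeasure μ] {g h : Ω → ℝ}

theorem integral_mul_le_integral_mul_integral_of_antivary (hgh : Antivary g h)
    (hg : Integrable g μ) (hh : Integrable h μ) (hgh_int : Integrable (fun x => g x * h x) μ) :
    ∫ x, g x * h x ∂μ ≤ (∫ x, g x ∂μ) * ∫ x, h x ∂μ := by
  have hdiag₁ : Integrable (fun p : Ω × Ω => g p.1 * h p.1) (μ.prod μ) := hgh_int.comp_fst μ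
  have hdiag₂ : Integrable (fun p : Ω × Ω => g p.2 * h p.2) (μ.prod μ) := hgh_int.comp_snd μ
  have hcross₁ : Integrable (fun p : Ω × Ω => g p.1 * h p.2) (μ.prod μ) := hg.mul_prod hh
  have hcross₂ : Integrable (fun p : Ω × Ω => g p.2 * h p.1) (μ.prod μ) := by
    simpa only [mul_comm] using hh.mul_prod hg
  have key : ∫ p, (g p.1 * h p.1 + g p.2 * h p.2) ∂(μ.prod μ)
      ≤ ∫ p, (g p.1 * h p.2 + g p.2 * h p.1) ∂(μ.prod μ) :=
    integral_mono (hdiag₁.add hdiag₂) (hcross₁.add hcross₂)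
      fun p => hgh.mul_add_mul_le_mul_add_mul p.1 p.2
  rw [integral_add hdiag₁ hdiag₂, integral_add hcross₁ hcross₂,
    integral_fun_fst (fun x => g x * h x), integral_fun_snd (fun x => g x * h x),
    integral_prod_mul g h] at key
  have hswap : ∫ p : Ω × Ω, g p.2 * h p.1 ∂(μ.prod μ) = (∫ x, g x ∂μ) * ∫ x, h x ∂μ := by
    simpa only [mul_comm] using integral_prod_mul (μ := μ) (ν := μ) h g
  simp only [probReal_univ, one_smul, hswap] at key
  linarith

theorem covariance_nonpos_of_antivary (hgh : Antivary g h) (hg : MemLp g 2 μ)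
    (hh : MemLp h 2 μ) : cov[g, h; μ] ≤ 0 := by
  rw [covariance_eq_sub hg hh, sub_nonpos]
  exact integral_mul_le_integral_mul_integral_of_antivary hgh (hg.integrable one_le_two)
    (hh.integrable one_le_two) (hg.integrable_mul hh)

end Chebyshev

theorem variance_midpoint_le_of_covariance_nonpos {Ω : Type*} [MeasurableSpace Ω]
    {μ : Measure Ω} [IsFiniteMeasure μ] {X Y : Ω → ℝ} (hX : MemLp X 2 μ) (hY : MemLp Y 2 μ)
    (hvar : Var[Y; μ] = Var[X; μ]) (hcov : cov[X, Y; μ] ≤ 0) :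
    Var[fun ω => (X ω + Y ω) / 2; μ] ≤ Var[X; μ] / 2 := by
  simp_rw [div_eq_inv_mul _ (2 : ℝ)]
  rw [variance_const_mul, variance_fun_add hX hY, hvar]
  nlinarith

theorem map_const_sub_volume_restrict (c : ℝ) (s : Set ℝ) :
    (volume.restrict s).map (fun x => c - x) = volume.restrict ((fun x => c - x) ⁻¹' s) := by
  have he : MeasurableEmbedding (fun x : ℝ => c - x) :=
    (MeasurableEquiv.subLeft c).measurableEmbedding
  have hinv : (fun x : ℝ => c - x) ⁻¹' ((fun x => c - x) ⁻¹' s) = s := by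
    ext x; simp
  conv_rhs => rw [← (Measure.measurePreserving_sub_left volume c).map_eq]
  rw [he.restrict_map, hinv]

theorem identDistrib_one_sub_of_map_eq_uniform {Ω : Type*} [MeasurableSpace Ω] {P : Measure Ω}
    {U : Ω → ℝ} (hU : Measurable U) (hunif : P.map U = volume.restrict (Icc (0 : ℝ) 1)) :
    IdentDistrib (fun ω => 1 - U ω) U P P where
  aemeasurable_fst := (measurable_const.sub hU).aemeasurable
  aemeasurable_snd := hU.aemeasurable
  map_eq := by
    have hrefl : (fun x : ℝ => 1 - x) ⁻¹' Icc 0 1 = Icc 0 1 := by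
      rw [preimage_const_sub_Icc]; norm_num
    change P.map ((fun x : ℝ => 1 - x) ∘ U) = _
    rw [← Measure.map_map (by fun_prop : Measurable fun x : ℝ => 1 - x) hU,
      hunif, map_const_sub_volume_restrict, hrefl]

/-- For `U` uniform on `[0,1]` and `f` nondecreasing with `f(U) ∈ L²`, the antithetic
covariance `Cov(f(U), f(1-U))` is nonpositive, so the antithetic estimator
`(f(U) + f(1-U))/2` has variance at most `Var(f(U))/2`. -/
theorem antithetic_monotone_cov_nonpos
    {Ω : Type*} [MeasureSpace Ω] [IsProbabilityMeasure (ℙ : Measure Ω)]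
    (U : Ω → ℝ) (hU : Measurable U)
    (hunif : Measure.map U (ℙ : Measure Ω) = volume.restrict (Icc (0:ℝ) 1))
    (f : ℝ → ℝ) (hf : Monotone f)
    (hL2 : MemLp (fun ω => f (U ω)) 2 ℙ) :
    (∫ ω, f (U ω) * f (1 - U ω) ∂ℙ)
      - (∫ ω, f (U ω) ∂ℙ) * (∫ ω, f (1 - U ω) ∂ℙ) ≤ 0 ∧
    variance (fun ω => (f (U ω) + f (1 - U ω)) / 2) ℙ
      ≤ variance (fun ω => f (U ω)) ℙ / 2 := by
  have hident : IdentDistrib (fun ω => f (1 - U ω)) (fun ω => f (U ω)) ℙ ℙ :=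
    (identDistrib_one_sub_of_map_eq_uniform hU hunif).comp hf.measurable
  have hL2' : MemLp (fun ω => f (1 - U ω)) 2 ℙ := hident.symm.memLp_snd hL2
  have hanti : Antivary (fun ω => f (U ω)) (fun ω => f (1 - U ω)) :=
    (hf.antivary (hf.comp_antitone fun x y hxy => sub_le_sub_left hxy 1)).comp_right U
  have hcov := covariance_nonpos_of_antivary hanti hL2 hL2'
  refine ⟨?_, variance_midpoint_le_of_covariance_nonpos hL2 hL2' hident.variance_eq hcov⟩
  rwa [covariance_eq_sub hL2 hL2'] at hcov
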